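/- Let U ∈ U(d). For A ⊆ {1,…,d} set Π_A = Σ_{i∈A} |i⟩⟨i| and Θ_A = U Π_A U†, and for disjoint Γ, Δ ⊆ {1,…,d} let ℙ_{Γ,Δ} be the orthogonal projector onto span{U|i⟩ : i ∈ Γᶜ} ∩ span{|j⟩ : j ∈ Δᶜ}, where Aᶜ denotes the complement in {1,…,d}. Then the optimal success probability of unambiguous discrimination of 𝒫_𝟙 and 𝒫_U without the use of entanglement equals p_u(𝒫_𝟙, 𝒫_U) = (1/2)·max{ ‖ℙ_{Γ,Δ}(Π_Γ + Θ_Δ)ℙ_{Γ,Δ}‖ : Γ, Δ ⊆ {1,…,d}, Γ ∩ Δ = ∅ }, where ‖·‖ is the operator norm. -/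

import Mathlib

open Matrix MeasureTheory
open scoped ENNReal ComplexOrder

noncomputable section

namespace Paper

/-- Trace norm `‖X‖₁ = Tr √(Xᴴ X)`. -/
noncomputable def traceNorm {n : Type*} [Fintype n] [DecidableEq n] (X : Matrix n n ℂ) : ℝ :=
  (((Matrix.posSemidef_conjTranspose_mul_self X).1.eigenvectorUnitary : Matrix n n ℂ) *
    Matrix.diagonal ((fun r : ℝ => (r : ℂ)) ∘ Real.sqrt ∘ (Matrix.posSemidef_conjTranspose_mul_self X).1.eigenvalues) *
    (star (Matrix.posSemidef_conjTranspose_mul_self X).1.eigenvectorUnitary : Matrix n n ℂ)).trace.re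

/-- `(S ⊗ id)(X)`, the map `S` applied to the first tensor factor. -/
def tensorApplyLeft {n n' m : Type*} [Fintype n] [Fintype m]
    (S : Matrix n n ℂ →ₗ[ℂ] Matrix n' n' ℂ)
    (X : Matrix (n × m) (n × m) ℂ) : Matrix (n' × m) (n' × m) ℂ :=
  Matrix.of fun p q => S (Matrix.of fun i j => X (i, p.2) (j, q.2)) p.1 q.1

/-- Diamond norm of a linear map between matrix spaces. -/
noncomputable def diamondNorm {n n' : Type*} [Fintype n] [DecidableEq n] [Fintype n']
    [DecidableEq n'] (S : Matrix n n ℂ →ₗ[ℂ] Matrix n' n' ℂ) : ℝ :=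
  sSup { t : ℝ | ∃ (k : ℕ) (X : Matrix (n × Fin (k + 1)) (n × Fin (k + 1)) ℂ),
    traceNorm X = 1 ∧ t = traceNorm (tensorApplyLeft S X) }

/-- The completely dephasing channel in the standard basis. -/
def dephaseMap (n : Type*) [Fintype n] [DecidableEq n] :
    Matrix n n ℂ →ₗ[ℂ] Matrix n n ℂ where
  toFun X := Matrix.diagonal fun i => X i i
  map_add' X Y := by
    ext i j
    by_cases h : i = j <;> simp [Matrix.diagonal_apply, h]
  map_smul' c X := by
    ext i j
    by_cases h : i = j <;> simp [Matrix.diagonal_apply, h]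

/-- The unitary channel `Φ_U(X) = U X Uᴴ`. -/
def unitaryChannel {n : Type*} [Fintype n] (U : Matrix n n ℂ) :
    Matrix n n ℂ →ₗ[ℂ] Matrix n n ℂ where
  toFun X := U * X * Uᴴ
  map_add' X Y := by simp [Matrix.mul_add, Matrix.add_mul]
  map_smul' c X := by simp [mul_smul_comm, smul_mul_assoc]

/-- The von Neumann measurement channel `𝒫_U(σ) = Σ_i ⟨i|U† σ U|i⟩ |i⟩⟨i| = diag(U† σ U)`. -/
def measChannel {n : Type*} [Fintype n] [DecidableEq n] (U : Matrix n n ℂ) :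
    Matrix n n ℂ →ₗ[ℂ] Matrix n n ℂ :=
  (dephaseMap n).comp (unitaryChannel Uᴴ)

/-- `N`-fold tensor (Kronecker) power of a matrix. -/
def tensorPow {d : ℕ} (U : Matrix (Fin d) (Fin d) ℂ) (N : ℕ) :
    Matrix (Fin N → Fin d) (Fin N → Fin d) ℂ :=
  Matrix.of fun f g => ∏ k, U (f k) (g k)

/-- Tensor product of a family of `d × d` matrices. -/
def tensorFamily {d N : ℕ} (ρ : Fin N → Matrix (Fin d) (Fin d) ℂ) :
    Matrix (Fin N → Fin d) (Fin N → Fin d) ℂ :=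
  Matrix.of fun f g => ∏ k, (ρ k) (f k) (g k)

/-- Density matrices. -/
def IsDensityMatrix {n : Type*} [Fintype n] (ρ : Matrix n n ℂ) : Prop :=
  ρ.PosSemidef ∧ ρ.trace = 1

/-- The set of diagonal unitary matrices `𝒟𝒰`. -/
def diagUnitary (n : Type*) [Fintype n] [DecidableEq n] : Set (Matrix n n ℂ) :=
  { E | E ∈ Matrix.unitaryGroup n ℂ ∧ E.IsDiag }

/-- `Θ(U)`: the angle of the shortest arc of the unit circle containing all eigenvalues. -/
noncomputable def thetaArc {n : Type*} [Fintype n] [DecidableEq n] (U : Matrix n n ℂ) : ℝ :=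
  sInf { t : ℝ | 0 ≤ t ∧ ∃ α : ℝ, ∀ lam ∈ spectrum ℂ U, ∃ s : ℝ, 0 ≤ s ∧ s ≤ t ∧
    lam = Complex.exp (Complex.I * (↑α + ↑s)) }

/-- `Υ(U) = min_{E ∈ 𝒟𝒰} Θ(UE)`. -/
noncomputable def upsilonArc {n : Type*} [Fintype n] [DecidableEq n] (U : Matrix n n ℂ) : ℝ :=
  sInf { t : ℝ | ∃ E ∈ diagUnitary n, t = thetaArc (U * E) }

/-- Numerical range `W(A)`. -/
def numericalRange {n : Type*} [Fintype n] (A : Matrix n n ℂ) : Set ℂ :=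
  { z | ∃ x : n → ℂ, (∑ i, ‖x i‖ ^ 2) = 1 ∧ z = star x ⬝ᵥ A.mulVec x }

/-- minimal modulus over the numerical range -/
noncomputable def nuMin {n : Type*} [Fintype n] (A : Matrix n n ℂ) : ℝ :=
  sInf { r : ℝ | ∃ z ∈ numericalRange A, r = ‖z‖ }

/-- Operator (spectral) norm of a matrix. -/
noncomputable def opNorm {n : Type*} [Fintype n] [DecidableEq n] (A : Matrix n n ℂ) : ℝ :=
  ‖Matrix.toEuclideanCLM (𝕜 := ℂ) A‖

/-- Matrix of the orthogonal projection onto a subspace of `EuclideanSpace ℂ n`. -/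
noncomputable def projMatrix {n : Type*} [Fintype n] [DecidableEq n]
    (K : Submodule ℂ (EuclideanSpace ℂ n)) : Matrix n n ℂ :=
  Matrix.toEuclideanLin.symm (K.subtype ∘ₗ (K.orthogonalProjectionOnto).toLinearMap)

/-- Matrix of the orthogonal projection onto the eigenspace of `A` for eigenvalue `lam`. -/
noncomputable def eigProj {n : Type*} [Fintype n] [DecidableEq n] (A : Matrix n n ℂ) (lam : ℂ) :
    Matrix n n ℂ :=
  projMatrix (Module.End.eigenspace (Matrix.toEuclideanLin A) lam)

end Paper

namespace Paper

/-- Optimal unambiguous discrimination probability of `𝒫_𝟙` vs `𝒫_U` without entanglement. -/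
noncomputable def puNoEnt {n : Type*} [Fintype n] [DecidableEq n] (U : Matrix n n ℂ) : ℝ :=
  sSup { t : ℝ | ∃ σ M₁ M₂ M₃ : Matrix n n ℂ,
    IsDensityMatrix σ ∧ M₁.PosSemidef ∧ M₂.PosSemidef ∧ M₃.PosSemidef ∧ M₁ + M₂ + M₃ = 1 ∧
    (M₂ * measChannel (1 : Matrix n n ℂ) σ).trace = 0 ∧
    (M₁ * measChannel U σ).trace = 0 ∧
    t = (1 / 2) * (((M₁ * measChannel (1 : Matrix n n ℂ) σ).trace).re +
                   ((M₂ * measChannel U σ).trace).re) }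

/-- Optimal entanglement-assisted unambiguous discrimination probability of `𝒫_𝟙` vs `𝒫_U`. -/
noncomputable def puEnt {n : Type*} [Fintype n] [DecidableEq n] (U : Matrix n n ℂ) : ℝ :=
  sSup { t : ℝ | ∃ (k : ℕ) (σ M₁ M₂ M₃ : Matrix (n × Fin (k + 1)) (n × Fin (k + 1)) ℂ),
    IsDensityMatrix σ ∧ M₁.PosSemidef ∧ M₂.PosSemidef ∧ M₃.PosSemidef ∧ M₁ + M₂ + M₃ = 1 ∧
    (M₂ * tensorApplyLeft (measChannel (1 : Matrix n n ℂ)) σ).trace = 0 ∧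
    (M₁ * tensorApplyLeft (measChannel U) σ).trace = 0 ∧
    t = (1 / 2) * (((M₁ * tensorApplyLeft (measChannel (1 : Matrix n n ℂ)) σ).trace).re +
                   ((M₂ * tensorApplyLeft (measChannel U) σ).trace).re) }

/-- `Π_A = Σ_{i ∈ A} |i⟩⟨i|`. -/
noncomputable def basisProj {n : Type*} [Fintype n] [DecidableEq n] (A : Finset n) :
    Matrix n n ℂ :=
  ∑ i ∈ A, Matrix.single i i (1 : ℂ)

/-- `ℙ_{Γ,Δ}`: projector onto `span{U|i⟩ : i ∈ Γᶜ} ∩ span{|j⟩ : j ∈ Δᶜ}`. -/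
noncomputable def PGD {n : Type*} [Fintype n] [DecidableEq n] (U : Matrix n n ℂ)
    (Γ Δ : Finset n) : Matrix n n ℂ :=
  projMatrix
    ((Submodule.span ℂ { v : EuclideanSpace ℂ n |
        ∃ i ∉ Γ, v = (WithLp.equiv 2 (n → ℂ)).symm (fun r => U r i) }) ⊓
     (Submodule.span ℂ { v : EuclideanSpace ℂ n |
        ∃ j ∉ Δ, v = (WithLp.equiv 2 (n → ℂ)).symm (Pi.single j 1) }))

/-- `W` acting on the `k`-th of `N` registers (identity elsewhere). -/
def actOn {d : ℕ} (N : ℕ) (W : Matrix (Fin d) (Fin d) ℂ) (k : ℕ) :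
    Matrix (Fin N → Fin d) (Fin N → Fin d) ℂ :=
  Matrix.of fun f g => ∏ j : Fin N,
    if (j : ℕ) = k then W (f j) (g j) else (if f j = g j then (1 : ℂ) else 0)

/-- A system operator extended by identity on the ancilla. -/
def sysOp {d N m : ℕ} (A : Matrix (Fin N → Fin d) (Fin N → Fin d) ℂ) :
    Matrix ((Fin N → Fin d) × Fin m) ((Fin N → Fin d) × Fin m) ℂ :=
  Matrix.of fun p q => A p.1 q.1 * (if p.2 = q.2 then (1 : ℂ) else 0)

/-- `C` is classically controlled on the first `k` registers, i.e. of the form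
`Σ_{i₁,…,i_k} |i₁…i_k⟩⟨i₁…i_k| ⊗ V_{i₁…i_k}`. -/
def ControlledOnFirst {d N m : ℕ} (k : ℕ)
    (C : Matrix ((Fin N → Fin d) × Fin m) ((Fin N → Fin d) × Fin m) ℂ) : Prop :=
  ∀ p q, (∃ j : Fin N, (j : ℕ) < k ∧ p.1 j ≠ q.1 j) → C p q = 0

/-- The sequential-scheme unitary
`A_W = (𝟙⊗…⊗W⊗𝟙ₘ)·C_{N-1}·…·C₁·(W⊗𝟙⊗…⊗𝟙ₘ)`. -/
noncomputable def seqUnitary {d N m : ℕ} (W : Matrix (Fin d) (Fin d) ℂ)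
    (C : ℕ → Matrix ((Fin N → Fin d) × Fin m) ((Fin N → Fin d) × Fin m) ℂ) :
    Matrix ((Fin N → Fin d) × Fin m) ((Fin N → Fin d) × Fin m) ℂ :=
  (((List.range (N - 1)).reverse.map fun j =>
      sysOp (actOn N W (j + 1)) * C (j + 1)).prod) * sysOp (actOn N W 0)

/-- Dephasing in the standard product basis on the first `N` registers only. -/
def dephaseFirst (d N m : ℕ) :
    Matrix ((Fin N → Fin d) × Fin m) ((Fin N → Fin d) × Fin m) ℂ →ₗ[ℂ]
    Matrix ((Fin N → Fin d) × Fin m) ((Fin N → Fin d) × Fin m) ℂ where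
  toFun X := Matrix.of fun p q => if p.1 = q.1 then X p q else 0
  map_add' X Y := by
    ext p q
    by_cases h : p.1 = q.1 <;> simp [h]
  map_smul' c X := by
    ext p q
    by_cases h : p.1 = q.1 <;> simp [h]

/-- The Hadamard matrix. -/
noncomputable def Hmat : Matrix (Fin 2) (Fin 2) ℂ :=
  (((1 : ℝ) / Real.sqrt 2 : ℝ) : ℂ) • !![1, 1; 1, -1]

/-- `ψ = (|1⟩⊗|1⟩ − |2⟩⊗|2⟩)/√2`. -/
noncomputable def psiVec : Fin 2 × Fin 2 → ℂ := fun p =>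
  if p = (0, 0) then (((1 : ℝ) / Real.sqrt 2 : ℝ) : ℂ)
  else if p = (1, 1) then -(((1 : ℝ) / Real.sqrt 2 : ℝ) : ℂ) else 0

/-- `ρ = |ψ⟩⟨ψ|`. -/
noncomputable def rhoPsi : Matrix (Fin 2 × Fin 2) (Fin 2 × Fin 2) ℂ :=
  Matrix.of fun p q => psiVec p * (starRingEnd ℂ) (psiVec q)

end Paper

/-!
A scheme `(σ, M₁, M₂, M₃)` is unambiguous exactly when `diag σ` vanishes where `diag M₂` does
not, and `diag (U†σU)` vanishes where `diag M₁` does not. Taking `Γ` to be the support of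
`diag M₁` and `Δ` the rest of the support of `diag M₂`, positivity of `σ` kills the corresponding
rows of `σ` and of `U†σ`, so `σ` lives on the range of `ℙ_{Γ,Δ}` and its success probability is at
most `½ Tr(ℙ(Π_Γ + Θ_Δ)ℙ σ) ≤ ½ ‖ℙ(Π_Γ + Θ_Δ)ℙ‖`. Conversely, a unit eigenvector of the positive
operator `ℙ(Π_Γ + Θ_Δ)ℙ` for the eigenvalue `‖ℙ(Π_Γ + Θ_Δ)ℙ‖` lies in the range of `ℙ`, and the
pure state on it, measured with `(Π_Γ, Π_Δ, 𝟙 - Π_Γ - Π_Δ)`, is an unambiguous scheme attaining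
the bound.
-/

namespace Paper

section GeneralMatrix

variable {n : Type*} [Fintype n] [DecidableEq n]

theorem _root_.Matrix.PosSemidef.apply_eq_zero_of_diag_eq_zero {𝕜 : Type*} [RCLike 𝕜]
    {A : Matrix n n 𝕜} (hA : A.PosSemidef) {j : n} (hj : A j j = 0) (i : n) : A j i = 0 := by
  have hcol : A *ᵥ Pi.single j 1 = 0 :=
    (hA.dotProduct_mulVec_zero_iff _).mp (by simpa [mulVec_single_one] using hj)
  have : A i j = 0 := by simpa [mulVec_single_one] using congrFun hcol i
  rw [← hA.isHermitian.apply j i, this, star_zero]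

theorem mul_apply_eq_zero_of_row_eq_zero {l m o R : Type*} [Fintype m] [NonUnitalNonAssocSemiring R]
    {A : Matrix l m R} (B : Matrix m o R) {i : l} (h : ∀ k, A i k = 0) (j : o) :
    (A * B) i j = 0 := by
  simp [mul_apply, h]

theorem trace_conj_mul_eq_of_mul_eq_self {m R : Type*} [Fintype m] [CommSemiring R] [StarRing R]
    {P σ : Matrix m m R} (hP : P.IsHermitian) (hσ : σ.IsHermitian) (h : P * σ = σ)
    (C : Matrix m m R) : (P * C * P * σ).trace = (C * σ).trace := by
  have h' : σ * P = σ := by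
    simpa [hP.eq, hσ.eq] using congrArg conjTranspose h
  rw [Matrix.mul_assoc, h, trace_mul_comm, ← Matrix.mul_assoc, h', trace_mul_comm]

theorem re_mulVec_dotProduct_star_le (T : Matrix n n ℂ) (x : n → ℂ) :
    ((T *ᵥ x) ⬝ᵥ star x).re ≤ opNorm T * (x ⬝ᵥ star x).re := by
  have hnorm : (x ⬝ᵥ star x).re = ‖WithLp.toLp 2 x‖ ^ 2 := by
    rw [← EuclideanSpace.inner_toLp_toLp]; exact inner_self_eq_norm_sq (𝕜 := ℂ) _
  rw [hnorm, ← EuclideanSpace.inner_toLp_toLp, ← toEuclideanCLM_toLp]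
  refine (re_inner_le_norm (𝕜 := ℂ) _ _).trans ?_
  calc _ ≤ ‖WithLp.toLp 2 x‖ * (opNorm T * ‖WithLp.toLp 2 x‖) :=
        mul_le_mul_of_nonneg_left (ContinuousLinearMap.le_opNorm _ _) (norm_nonneg _)
    _ = opNorm T * ‖WithLp.toLp 2 x‖ ^ 2 := by ring

theorem re_trace_mul_le_opNorm_mul (T : Matrix n n ℂ) {σ : Matrix n n ℂ} (hσ : σ.PosSemidef) :
    (T * σ).trace.re ≤ opNorm T * σ.trace.re := by
  obtain ⟨m, v, rfl⟩ := Matrix.posSemidef_iff_eq_sum_vecMulVec.mp hσ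
  simp only [Finset.mul_sum, trace_sum, mul_vecMulVec, trace_vecMulVec, Complex.re_sum]
  exact Finset.sum_le_sum fun i _ => re_mulVec_dotProduct_star_le T (v i)

open scoped Matrix.Norms.L2Operator MatrixOrder in
theorem exists_eigenvector_opNorm [Nonempty n] {T : Matrix n n ℂ} (hT : T.PosSemidef) :
    ∃ v : n → ℂ, v ⬝ᵥ star v = 1 ∧ T *ᵥ v = (opNorm T : ℂ) • v := by
  -- For the L2 operator norm `‖T‖` is `opNorm T`, and the norm of a positive element of a
  -- C⋆-algebra lies in its spectrum.
  have hspec : (opNorm T : ℂ) ∈ spectrum ℂ (toEuclideanLin T) := by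
    rw [spectrum_toLpLin, ← Complex.coe_algebraMap, spectrum.algebraMap_mem_iff]
    exact CStarAlgebra.norm_mem_spectrum_of_nonneg hT.nonneg
  obtain ⟨x, hx⟩ := (Module.End.hasEigenvalue_iff_mem_spectrum.mpr hspec).exists_hasEigenvector
  refine ⟨((‖x‖⁻¹ : ℂ) • x).ofLp, ?_, ?_⟩
  · have hunit : ‖(‖x‖⁻¹ : ℂ) • x‖ = 1 := norm_smul_inv_norm hx.2
    rw [← EuclideanSpace.inner_toLp_toLp, WithLp.toLp_ofLp, inner_self_eq_norm_sq_to_K, hunit]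
    simp
  · have hTx := congrArg WithLp.ofLp hx.apply_eq_smul
    simp only [toLpLin_apply] at hTx
    rw [WithLp.ofLp_smul, mulVec_smul, hTx, WithLp.ofLp_smul, smul_comm]

end GeneralMatrix

section Projection

variable {n : Type*} [Fintype n] [DecidableEq n] (K : Submodule ℂ (EuclideanSpace ℂ n))

theorem toEuclideanCLM_projMatrix :
    toEuclideanCLM (n := n) (𝕜 := ℂ) (projMatrix K) = K.starProjection := by
  ext1 x
  exact LinearMap.congr_fun (LinearEquiv.apply_symm_apply toEuclideanLin _) x

theorem isStarProjection_projMatrix : IsStarProjection (projMatrix K) := by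
  refine ⟨EquivLike.injective (toEuclideanCLM (n := n) (𝕜 := ℂ)) ?_,
    EquivLike.injective (toEuclideanCLM (n := n) (𝕜 := ℂ)) ?_⟩
  · rw [map_mul, toEuclideanCLM_projMatrix]
    exact K.isIdempotentElem_starProjection
  · rw [map_star, toEuclideanCLM_projMatrix]
    exact isSelfAdjoint_starProjection K

theorem projMatrix_mulVec_eq_self_iff {x : n → ℂ} :
    projMatrix K *ᵥ x = x ↔ WithLp.toLp 2 x ∈ K := by
  rw [← Submodule.starProjection_eq_self_iff, ← toEuclideanCLM_projMatrix, toEuclideanCLM_toLp]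
  exact (WithLp.linearEquiv 2 ℂ (n → ℂ)).symm.injective.eq_iff.symm

theorem projMatrix_mul_eq_self_iff {m : Type*} {A : Matrix n m ℂ} :
    projMatrix K * A = A ↔ ∀ l, WithLp.toLp 2 (fun i => A i l) ∈ K := by
  simp_rw [← projMatrix_mulVec_eq_self_iff]
  exact ⟨fun h l => funext fun i => congrFun₂ h i l, fun h => ext fun i l => congrFun (h l) i⟩

end Projection

section Span

variable {𝕜 : Type*} [RCLike 𝕜] {n : Type*} [Fintype n] [DecidableEq n]

theorem mem_span_single_iff {Δ : Finset n} {v : EuclideanSpace 𝕜 n} :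
    v ∈ Submodule.span 𝕜 {w : EuclideanSpace 𝕜 n |
        ∃ j ∉ Δ, w = (WithLp.equiv 2 (n → 𝕜)).symm (Pi.single j 1)} ↔
      ∀ j ∈ Δ, v.ofLp j = 0 := by
  have hset : {w : EuclideanSpace 𝕜 n |
      ∃ j ∉ Δ, w = (WithLp.equiv 2 (n → 𝕜)).symm (Pi.single j 1)} =
      PiLp.basisFun 2 𝕜 n '' (↑Δ)ᶜ := by
    ext w
    simp only [Set.mem_ofPred_eq, Set.mem_image, Set.mem_compl_iff, Finset.mem_coe,
      PiLp.basisFun_apply]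
    exact ⟨fun ⟨j, hj, h⟩ => ⟨j, hj, h.symm⟩, fun ⟨j, hj, h⟩ => ⟨j, hj, h.symm⟩⟩
  rw [hset, Module.Basis.mem_span_image]
  simp [Set.subset_def, PiLp.basisFun_repr, not_imp_comm]

theorem mem_span_col_iff {U : Matrix n n 𝕜} (hU : U ∈ unitaryGroup n 𝕜) {Γ : Finset n}
    {v : EuclideanSpace 𝕜 n} :
    v ∈ Submodule.span 𝕜 {w : EuclideanSpace 𝕜 n |
        ∃ i ∉ Γ, w = (WithLp.equiv 2 (n → 𝕜)).symm (fun r => U r i)} ↔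
      ∀ i ∈ Γ, (Uᴴ *ᵥ v.ofLp) i = 0 := by
  have hset : {w : EuclideanSpace 𝕜 n |
      ∃ i ∉ Γ, w = (WithLp.equiv 2 (n → 𝕜)).symm (fun r => U r i)} =
      toEuclideanLin U '' {w | ∃ j ∉ Γ, w = (WithLp.equiv 2 (n → 𝕜)).symm (Pi.single j 1)} := by
    have hcol (j : n) : toEuclideanLin U (WithLp.toLp 2 (Pi.single j 1)) =
        WithLp.toLp 2 (fun r => U r j) :=
      congrArg (WithLp.toLp 2) (mulVec_single_one U j)
    ext w
    simp only [Set.mem_ofPred_eq, Set.mem_image, WithLp.equiv_symm_apply]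
    exact ⟨fun ⟨j, hj, h⟩ => ⟨_, ⟨j, hj, rfl⟩, (hcol j).trans h.symm⟩,
      fun ⟨_, ⟨j, hj, h⟩, h'⟩ => ⟨j, hj, h'.symm.trans (h ▸ hcol j)⟩⟩
  have hU₁ : Uᴴ * U = 1 := by simpa [star_eq_conjTranspose] using mem_unitaryGroup_iff'.mp hU
  have hU₂ : U * Uᴴ = 1 := by simpa [star_eq_conjTranspose] using mem_unitaryGroup_iff.mp hU
  rw [hset, Submodule.span_image, Submodule.mem_map]
  constructor
  · rintro ⟨w, hw, rfl⟩
    simpa [mulVec_mulVec, hU₁] using mem_span_single_iff.mp hw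
  · intro h
    refine ⟨toEuclideanLin Uᴴ v, mem_span_single_iff.mpr (by simpa using h), ?_⟩
    change WithLp.toLp 2 (U *ᵥ (Uᴴ *ᵥ v.ofLp)) = v
    rw [mulVec_mulVec, hU₂, one_mulVec, WithLp.toLp_ofLp]

end Span

section Channel

variable {n : Type*} [Fintype n] [DecidableEq n]

theorem measChannel_apply (U σ : Matrix n n ℂ) :
    measChannel U σ = diagonal fun i => (Uᴴ * σ * U) i i := by
  simp [measChannel, dephaseMap, unitaryChannel]

theorem trace_mul_measChannel (M U σ : Matrix n n ℂ) :
    (M * measChannel U σ).trace = ∑ i, M i i * (Uᴴ * σ * U) i i := by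
  simp [measChannel_apply, trace, mul_diagonal]

theorem basisProj_eq_diagonal (A : Finset n) :
    basisProj A = diagonal fun i => if i ∈ A then 1 else 0 := by
  ext i j
  by_cases h : i = j
  · simp [basisProj, Matrix.sum_apply, single_apply, h]
  · simp only [basisProj, Matrix.sum_apply, single_apply, diagonal_apply_ne _ h]
    exact Finset.sum_eq_zero fun k _ => if_neg fun hk => h (hk.1.symm.trans hk.2)

theorem basisProj_posSemidef (A : Finset n) : (basisProj A).PosSemidef := by
  rw [basisProj_eq_diagonal]
  exact .diagonal fun i => by split_ifs <;> simp

theorem basisProj_add_basisProj_add_compl {Γ Δ : Finset n} (h : Disjoint Γ Δ) :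
    basisProj Γ + basisProj Δ + basisProj (Γ ∪ Δ)ᶜ = 1 := by
  rw [basisProj, basisProj, basisProj, ← Finset.sum_union h, Finset.sum_add_sum_compl]
  exact sum_single_one

theorem trace_basisProj_mul (A : Finset n) (M : Matrix n n ℂ) :
    (basisProj A * M).trace = ∑ i ∈ A, M i i := by
  simp [basisProj_eq_diagonal, trace, diagonal_mul, Finset.sum_ite_mem]

theorem trace_basisProj_mul_measChannel (A : Finset n) (U σ : Matrix n n ℂ) :
    (basisProj A * measChannel U σ).trace = ∑ i ∈ A, (Uᴴ * σ * U) i i := by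
  simp [trace_basisProj_mul, measChannel_apply]

theorem trace_basisProj_add_conj_mul (U σ : Matrix n n ℂ) (Γ Δ : Finset n) :
    ((basisProj Γ + U * basisProj Δ * Uᴴ) * σ).trace =
      (basisProj Γ * measChannel 1 σ).trace + (basisProj Δ * measChannel U σ).trace := by
  rw [add_mul, trace_add, trace_basisProj_mul_measChannel, trace_basisProj_mul_measChannel,
    trace_basisProj_mul, Matrix.mul_assoc, Matrix.mul_assoc, trace_mul_comm, Matrix.mul_assoc,
    trace_basisProj_mul]
  simp [Matrix.mul_assoc]

end Channel

section Discrimination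

variable {n : Type*} [Fintype n] [DecidableEq n]

theorem exists_disjoint_sum_mul_le {R ι : Type*} [CommSemiring R] [PartialOrder R] [IsOrderedRing R]
    [NoZeroDivisors R] [Fintype ι] [DecidableEq ι] {m₁ m₂ p q : ι → R}
    (hm₁ : ∀ i, m₁ i ≤ 1) (hm₂ : ∀ i, m₂ i ≤ 1) (hp : ∀ i, 0 ≤ p i) (hq : ∀ i, 0 ≤ q i)
    (h₁ : ∀ i, m₁ i * q i = 0) (h₂ : ∀ i, m₂ i * p i = 0) :
    ∃ Γ Δ : Finset ι, Disjoint Γ Δ ∧ (∀ i ∈ Γ, q i = 0) ∧ (∀ j ∈ Δ, p j = 0) ∧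
      ∑ i, m₁ i * p i + ∑ i, m₂ i * q i ≤ ∑ i ∈ Γ, p i + ∑ i ∈ Δ, q i := by
  classical
  refine ⟨Finset.univ.filter (m₁ · ≠ 0), Finset.univ.filter fun i => m₁ i = 0 ∧ m₂ i ≠ 0,
    Finset.disjoint_filter.mpr fun i _ h h' => h h'.1, fun i hi => ?_, fun j hj => ?_, ?_⟩
  · exact (mul_eq_zero.mp (h₁ i)).resolve_left (Finset.mem_filter.mp hi).2
  · exact (mul_eq_zero.mp (h₂ j)).resolve_left (Finset.mem_filter.mp hj).2.2
  rw [Finset.sum_filter, Finset.sum_filter, ← Finset.sum_add_distrib, ← Finset.sum_add_distrib]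
  refine Finset.sum_le_sum fun i _ => ?_
  by_cases h0 : m₁ i = 0
  · by_cases h0' : m₂ i = 0
    · simp [h0, h0']
    · simpa [h0, h0'] using mul_le_of_le_one_left (hq i) (hm₂ i)
  · have hqi : q i = 0 := (mul_eq_zero.mp (h₁ i)).resolve_left h0
    simpa [h0, hqi] using mul_le_of_le_one_left (hp i) (hm₁ i)

theorem PGD_mul_eq_self_iff {U : Matrix n n ℂ} (hU : U ∈ unitaryGroup n ℂ) {Γ Δ : Finset n}
    {m : Type*} {A : Matrix n m ℂ} :
    PGD U Γ Δ * A = A ↔ (∀ i ∈ Γ, ∀ l, (Uᴴ * A) i l = 0) ∧ ∀ j ∈ Δ, ∀ l, A j l = 0 := by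
  rw [PGD, projMatrix_mul_eq_self_iff]
  simp only [Submodule.mem_inf, mem_span_col_iff hU, mem_span_single_iff]
  exact ⟨fun h => ⟨fun i hi l => (h l).1 i hi, fun j hj l => (h l).2 j hj⟩,
    fun h l => ⟨fun i hi => h.1 i hi l, fun j hj => h.2 j hj l⟩⟩

def unambiguousSuccessProbs (U : Matrix n n ℂ) : Set ℝ :=
  { t : ℝ | ∃ σ M₁ M₂ M₃ : Matrix n n ℂ,
    IsDensityMatrix σ ∧ M₁.PosSemidef ∧ M₂.PosSemidef ∧ M₃.PosSemidef ∧ M₁ + M₂ + M₃ = 1 ∧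
    (M₂ * measChannel (1 : Matrix n n ℂ) σ).trace = 0 ∧
    (M₁ * measChannel U σ).trace = 0 ∧
    t = (1 / 2) * (((M₁ * measChannel (1 : Matrix n n ℂ) σ).trace).re +
                   ((M₂ * measChannel U σ).trace).re) }

theorem puNoEnt_eq_sSup (U : Matrix n n ℂ) : puNoEnt U = sSup (unambiguousSuccessProbs U) := rfl

theorem unambiguousSuccessProbs_eq_empty [IsEmpty n] (U : Matrix n n ℂ) :
    unambiguousSuccessProbs U = ∅ :=
  Set.eq_empty_of_forall_notMem fun _ ⟨σ, _, _, _, hσ, _⟩ => by simpa using hσ.2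

theorem zero_mem_unambiguousSuccessProbs [Nonempty n] (U : Matrix n n ℂ) :
    0 ∈ unambiguousSuccessProbs U := by
  let e : n → ℂ := Pi.single (Classical.arbitrary n) 1
  refine ⟨vecMulVec e (star e), 0, 0, 1, ⟨posSemidef_vecMulVec_self_star e, ?_⟩, .zero, .zero,
    .one, by simp, by simp, by simp, by simp⟩
  simp [e]

theorem diag_mul_eq_zero_of_trace_mul_measChannel_eq_zero {M U σ : Matrix n n ℂ}
    (hM : M.PosSemidef) (hσ : σ.PosSemidef) (h : (M * measChannel U σ).trace = 0) (i : n) :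
    M i i * (Uᴴ * σ * U) i i = 0 := by
  rw [trace_mul_measChannel] at h
  exact (Finset.sum_eq_zero_iff_of_nonneg fun k _ => mul_nonneg hM.diag_nonneg
    (hσ.conjTranspose_mul_mul_same U).diag_nonneg).mp h i (Finset.mem_univ i)

theorem PGD_mul_eq_self_of_posSemidef {U : Matrix n n ℂ} (hU : U ∈ unitaryGroup n ℂ)
    {σ : Matrix n n ℂ} (hσ : σ.PosSemidef) {Γ Δ : Finset n}
    (hΓ : ∀ i ∈ Γ, (Uᴴ * σ * U) i i = 0) (hΔ : ∀ j ∈ Δ, σ j j = 0) :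
    PGD U Γ Δ * σ = σ := by
  have hUσ : Uᴴ * σ = (Uᴴ * σ * U) * Uᴴ := by
    have hU₂ : U * Uᴴ = 1 := by simpa [star_eq_conjTranspose] using mem_unitaryGroup_iff.mp hU
    simp only [Matrix.mul_assoc, hU₂, Matrix.mul_one]
  refine (PGD_mul_eq_self_iff hU).mpr ⟨fun i hi => hUσ ▸ mul_apply_eq_zero_of_row_eq_zero _
    ((hσ.conjTranspose_mul_mul_same U).apply_eq_zero_of_diag_eq_zero (hΓ i hi)),
    fun j hj => hσ.apply_eq_zero_of_diag_eq_zero (hΔ j hj)⟩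

theorem re_trace_mul_le_opNorm_PGD_conj {U σ : Matrix n n ℂ} {Γ Δ : Finset n}
    (hσ : IsDensityMatrix σ) (hPσ : PGD U Γ Δ * σ = σ) (C : Matrix n n ℂ) :
    (C * σ).trace.re ≤ opNorm (PGD U Γ Δ * C * PGD U Γ Δ) := by
  rw [← trace_conj_mul_eq_of_mul_eq_self (P := PGD U Γ Δ)
    (isStarProjection_projMatrix _).isSelfAdjoint hσ.1.isHermitian hPσ]
  simpa [hσ.2] using re_trace_mul_le_opNorm_mul _ hσ.1

theorem exists_disjoint_le_half_opNorm {U : Matrix n n ℂ} (hU : U ∈ unitaryGroup n ℂ) {t : ℝ}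
    (ht : t ∈ unambiguousSuccessProbs U) :
    ∃ Γ Δ : Finset n, Disjoint Γ Δ ∧
      t ≤ (1 / 2) * opNorm (PGD U Γ Δ * (basisProj Γ + U * basisProj Δ * Uᴴ) * PGD U Γ Δ) := by
  obtain ⟨σ, M₁, M₂, M₃, hσ, h₁, h₂, h₃, hsum, hc₁, hc₂, rfl⟩ := ht
  set τ := Uᴴ * σ * U
  have hdiag (i : n) : M₁ i i + M₂ i i + M₃ i i = 1 := by
    simpa using congrFun₂ hsum i i
  have hm₁ (i : n) : M₁ i i ≤ 1 :=
    ((le_add_of_nonneg_right h₂.diag_nonneg).trans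
      (le_add_of_nonneg_right h₃.diag_nonneg)).trans_eq (hdiag i)
  have hm₂ (i : n) : M₂ i i ≤ 1 :=
    ((le_add_of_nonneg_left h₁.diag_nonneg).trans
      (le_add_of_nonneg_right h₃.diag_nonneg)).trans_eq (hdiag i)
  obtain ⟨Γ, Δ, hdisj, hτΓ, hσΔ, hle⟩ := exists_disjoint_sum_mul_le hm₁ hm₂
    (fun _ => hσ.1.diag_nonneg) (fun _ => (hσ.1.conjTranspose_mul_mul_same U).diag_nonneg)
    (diag_mul_eq_zero_of_trace_mul_measChannel_eq_zero h₁ hσ.1 hc₂)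
    (by simpa using diag_mul_eq_zero_of_trace_mul_measChannel_eq_zero h₂ hσ.1 hc₁)
  refine ⟨Γ, Δ, hdisj, mul_le_mul_of_nonneg_left ?_ (by norm_num)⟩
  calc _ = (∑ i, M₁ i i * σ i i + ∑ i, M₂ i i * τ i i).re := by
        simp [trace_mul_measChannel, τ]
    _ ≤ (∑ i ∈ Γ, σ i i + ∑ i ∈ Δ, τ i i).re := (Complex.le_def.mp hle).1
    _ = ((basisProj Γ + U * basisProj Δ * Uᴴ) * σ).trace.re := by
        simp [trace_basisProj_add_conj_mul, trace_basisProj_mul_measChannel, τ]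
    _ ≤ _ := re_trace_mul_le_opNorm_PGD_conj hσ
        (PGD_mul_eq_self_of_posSemidef hU hσ.1 hτΓ hσΔ) _

theorem half_re_trace_mem_unambiguousSuccessProbs {U : Matrix n n ℂ}
    (hU : U ∈ unitaryGroup n ℂ) {Γ Δ : Finset n} (hdisj : Disjoint Γ Δ) {σ : Matrix n n ℂ}
    (hσ : IsDensityMatrix σ) (hPσ : PGD U Γ Δ * σ = σ) :
    (1 / 2) * ((basisProj Γ + U * basisProj Δ * Uᴴ) * σ).trace.re ∈
      unambiguousSuccessProbs U := by
  obtain ⟨hΓ, hΔ⟩ := (PGD_mul_eq_self_iff hU).mp hPσ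
  refine ⟨σ, basisProj Γ, basisProj Δ, basisProj (Γ ∪ Δ)ᶜ, hσ, basisProj_posSemidef _,
    basisProj_posSemidef _, basisProj_posSemidef _, basisProj_add_basisProj_add_compl hdisj,
    ?_, ?_, by rw [trace_basisProj_add_conj_mul, Complex.add_re]⟩
  · rw [trace_basisProj_mul_measChannel]
    exact Finset.sum_eq_zero fun j hj => by simpa using hΔ j hj j
  · rw [trace_basisProj_mul_measChannel]
    exact Finset.sum_eq_zero fun i hi => mul_apply_eq_zero_of_row_eq_zero U (hΓ i hi) i

theorem exists_mem_ge_half_opNorm [Nonempty n] {U : Matrix n n ℂ}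
    (hU : U ∈ unitaryGroup n ℂ) {Γ Δ : Finset n} (hdisj : Disjoint Γ Δ) :
    ∃ t ∈ unambiguousSuccessProbs U,
      opNorm (PGD U Γ Δ * (basisProj Γ + U * basisProj Δ * Uᴴ) * PGD U Γ Δ) ≤ 2 * t := by
  set P := PGD U Γ Δ
  set C := basisProj Γ + U * basisProj Δ * Uᴴ
  set T := P * C * P
  have hP : IsStarProjection P := isStarProjection_projMatrix _
  have hT : T.PosSemidef := by
    simpa [T, hP.isSelfAdjoint.isHermitian.eq] using
      ((basisProj_posSemidef Γ).add ((basisProj_posSemidef Δ).mul_mul_conjTranspose_same U)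
        ).conjTranspose_mul_mul_same P
  rcases eq_or_ne (opNorm T) 0 with h0 | h0
  · exact ⟨0, zero_mem_unambiguousSuccessProbs U, by simp [h0]⟩
  obtain ⟨v, hv1, hTv⟩ := exists_eigenvector_opNorm hT
  -- `v = ‖T‖⁻¹ • P (C P v)` lies in the range of `P`.
  have hPv : P *ᵥ v = v := by
    have hv : v = (opNorm T : ℂ)⁻¹ • (T *ᵥ v) := by
      rw [hTv, smul_smul, inv_mul_cancel₀ (by exact_mod_cast h0), one_smul]
    have hPT : P * T = T := by simp only [T, ← Matrix.mul_assoc, hP.isIdempotentElem.eq]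
    rw [hv, mulVec_smul, mulVec_mulVec, hPT]
  set σ := vecMulVec v (star v)
  have hσ : IsDensityMatrix σ := ⟨posSemidef_vecMulVec_self_star v, by rwa [trace_vecMulVec]⟩
  have hPσ : P * σ = σ := by rw [mul_vecMulVec, hPv]
  refine ⟨_, half_re_trace_mem_unambiguousSuccessProbs hU hdisj hσ hPσ, le_of_eq ?_⟩
  rw [← trace_conj_mul_eq_of_mul_eq_self hP.isSelfAdjoint hσ.1.isHermitian hPσ, mul_vecMulVec,
    hTv, trace_vecMulVec, smul_dotProduct, hv1]
  simp

end Discrimination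

end Paper

namespace Paper

theorem stmt7 (d : ℕ) (U : Matrix (Fin d) (Fin d) ℂ)
    (hU : U ∈ Matrix.unitaryGroup (Fin d) ℂ) :
    puNoEnt U = (1 / 2) * sSup { t : ℝ | ∃ Γ Δ : Finset (Fin d), Disjoint Γ Δ ∧
      t = opNorm (PGD U Γ Δ * (basisProj Γ + U * basisProj Δ * Uᴴ) * PGD U Γ Δ) } := by
  rw [puNoEnt_eq_sSup]
  rcases isEmpty_or_nonempty (Fin d) with hd | hd
  · have hzero (A : Matrix (Fin d) (Fin d) ℂ) : opNorm A = 0 := by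
      simp [opNorm, Subsingleton.elim A 0]
    simp [unambiguousSuccessProbs_eq_empty, hzero]
  · rw [← smul_eq_mul, ← Real.sSup_smul_of_nonneg (by norm_num)]
    apply csSup_eq_csSup_of_forall_exists_le
    · intro t ht
      obtain ⟨Γ, Δ, hdisj, hle⟩ := exists_disjoint_le_half_opNorm hU ht
      exact ⟨_, Set.smul_mem_smul_set ⟨Γ, Δ, hdisj, rfl⟩, hle⟩
    · rintro _ ⟨_, ⟨Γ, Δ, hdisj, rfl⟩, rfl⟩
      obtain ⟨t, ht, hle⟩ := exists_mem_ge_half_opNorm hU hdisj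
      exact ⟨t, ht, by simp only [smul_eq_mul]; linarith⟩

end Paper
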